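/- arXiv:1307.1056 — 3 statements merged into one kernel-verified Lean document; each statement's English description precedes it below -/
import Mathlib

section
/- Let O ⊆ ℝ^n be open, T > 0, and let X : O × [0,T] → ℝ^{n+1} be C² such that for each (θ,t) the metric matrix g_{ij}(θ,t) := ∂_{θ_i}X · ∂_{θ_j}X (i,j = 1,…,n) is invertible, with inverse (g^{ij}). Let U : O × [0,T] → ℝ be C² and set V := ∂_t X (components V^r, r = 1,…,n+1). For a scalar function W : O × [0,T] → ℝ define its tangential gradient components D_l W := Σ_{i,j} g^{ij} (∂_{θ_j}W)(∂_{θ_i}X^l), l = 1,…,n+1, and define the projection P_{sl} := Σ_{i,j} g^{ij} (∂_{θ_i}X^s)(∂_{θ_j}X^l). Then for every l = 1,…,n+1 and every (θ,t): ∂_t (D_l U) = D_l(∂_t U) − Σ_{r=1}^{n+1} A_{lr} D_r U, where A_{lr} := D_l V^r + Σ_{s=1}^{n+1} P_{sl} D_r V^s − D_r V^l. -/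
/-!
Write `J = (∂_{θ_i} X^s)` and `G = (J Jᵀ)⁻¹`; the tangential gradients `D_l F^k` of a family of
functions are the entries of `Jᵀ G (∂_{θ_i} F^k)`. Differentiating this product in time, `∂_t`
commutes with `∂_θ` (symmetry of second derivatives, which survives up to `t = 0, T` since the
domain is the closure of its interior), so `∂_t J = (∂_{θ_i} V^s)`, and
`∂_t G = -G (∂_t (J Jᵀ)) G`. What remains is a matrix identity that only uses `G J Jᵀ = 1` and
the symmetry of `G`.
-/

open scoped BigOperators

/-- Partial derivative in the parameter direction `θ_i`, taken within the set `S`,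
for a scalar function of `(θ, t) ∈ ℝ^n × ℝ`. -/
noncomputable def dtheta {n : ℕ} (S : Set ((Fin n → ℝ) × ℝ)) (W : (Fin n → ℝ) × ℝ → ℝ)
    (i : Fin n) (p : (Fin n → ℝ) × ℝ) : ℝ :=
  fderivWithin ℝ W S p (Pi.single i 1, 0)

/-- Partial derivative in the time direction, taken within the set `S`. -/
noncomputable def dtime {n : ℕ} (S : Set ((Fin n → ℝ) × ℝ)) (W : (Fin n → ℝ) × ℝ → ℝ)
    (p : (Fin n → ℝ) × ℝ) : ℝ :=
  fderivWithin ℝ W S p (0, 1)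

/-- Induced metric `g_{ij} = ∂_{θ_i} X · ∂_{θ_j} X` of a parametrized moving surface. -/
noncomputable def metricMat {n : ℕ} (S : Set ((Fin n → ℝ) × ℝ))
    (X : (Fin n → ℝ) × ℝ → Fin (n + 1) → ℝ) (p : (Fin n → ℝ) × ℝ) :
    Matrix (Fin n) (Fin n) ℝ :=
  Matrix.of fun i j => ∑ l, dtheta S (fun q => X q l) i p * dtheta S (fun q => X q l) j p

/-- `l`-th ambient component of the tangential gradient:
`D_l W = Σ_{i,j} g^{ij} (∂_{θ_j} W)(∂_{θ_i} X^l)`. -/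
noncomputable def tgrad {n : ℕ} (S : Set ((Fin n → ℝ) × ℝ))
    (X : (Fin n → ℝ) × ℝ → Fin (n + 1) → ℝ) (W : (Fin n → ℝ) × ℝ → ℝ)
    (l : Fin (n + 1)) (p : (Fin n → ℝ) × ℝ) : ℝ :=
  ∑ i, ∑ j, (metricMat S X p)⁻¹ i j * dtheta S W j p * dtheta S (fun q => X q l) i p

/-- Tangential projection `P_{sl} = Σ_{i,j} g^{ij} (∂_{θ_i} X^s)(∂_{θ_j} X^l)`. -/
noncomputable def tproj {n : ℕ} (S : Set ((Fin n → ℝ) × ℝ))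
    (X : (Fin n → ℝ) × ℝ → Fin (n + 1) → ℝ) (s l : Fin (n + 1)) (p : (Fin n → ℝ) × ℝ) : ℝ :=
  ∑ i, ∑ j, (metricMat S X p)⁻¹ i j * dtheta S (fun q => X q s) i p * dtheta S (fun q => X q l) j p

open Matrix Topology

section MatrixCalculus

variable {𝕜 E : Type*} [NontriviallyNormedField 𝕜] [NormedAddCommGroup E] [NormedSpace 𝕜 E]
  {s : Set E} {x : E} {m k o : Type*}

theorem DifferentiableWithinAt.matrix_mul_apply [Fintype k] {A : E → Matrix m k 𝕜}
    {B : E → Matrix k o 𝕜} (hA : ∀ i j, DifferentiableWithinAt 𝕜 (fun q => A q i j) s x)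
    (hB : ∀ i j, DifferentiableWithinAt 𝕜 (fun q => B q i j) s x) (i : m) (j : o) :
    DifferentiableWithinAt 𝕜 (fun q => (A q * B q) i j) s x := by
  simp only [mul_apply]
  exact .fun_sum fun l _ => (hA i l).mul (hB l j)

theorem DifferentiableWithinAt.matrix_det [Fintype m] [DecidableEq m] {M : E → Matrix m m 𝕜}
    (hM : ∀ i j, DifferentiableWithinAt 𝕜 (fun q => M q i j) s x) :
    DifferentiableWithinAt 𝕜 (fun q => (M q).det) s x := by
  simp only [det_apply']
  exact .fun_sum fun σ _ => (differentiableWithinAt_const _).mul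
    (HasFDerivWithinAt.finsetProd fun i _ => (hM (σ i) i).hasFDerivWithinAt).differentiableWithinAt

theorem DifferentiableWithinAt.matrix_inv_apply [Fintype m] [DecidableEq m]
    {M : E → Matrix m m 𝕜} (hM : ∀ i j, DifferentiableWithinAt 𝕜 (fun q => M q i j) s x)
    (hx : IsUnit (M x)) (i j : m) :
    DifferentiableWithinAt 𝕜 (fun q => (M q)⁻¹ i j) s x := by
  have hadj : DifferentiableWithinAt 𝕜 (fun q => (M q).adjugate i j) s x := by
    simp only [adjugate_apply]
    refine matrix_det fun a b => ?_
    simp only [updateRow_apply]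
    split_ifs
    exacts [differentiableWithinAt_const _, hM a b]
  simp only [inv_def, Matrix.smul_apply, Ring.inverse_eq_inv', smul_eq_mul]
  exact ((matrix_det hM).inv ((isUnit_iff_isUnit_det _).mp hx).ne_zero).mul hadj

noncomputable def matrixFDerivWithin (M : E → Matrix m o 𝕜) (s : Set E) (x v : E) :
    Matrix m o 𝕜 :=
  of fun i j => fderivWithin 𝕜 (fun q => M q i j) s x v

theorem matrixFDerivWithin_transpose (M : E → Matrix m o 𝕜) (v : E) :
    matrixFDerivWithin (fun q => (M q)ᵀ) s x v = (matrixFDerivWithin M s x v)ᵀ :=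
  rfl

theorem matrixFDerivWithin_mul [Fintype k] (hxs : UniqueDiffWithinAt 𝕜 s x)
    {A : E → Matrix m k 𝕜} {B : E → Matrix k o 𝕜}
    (hA : ∀ i j, DifferentiableWithinAt 𝕜 (fun q => A q i j) s x)
    (hB : ∀ i j, DifferentiableWithinAt 𝕜 (fun q => B q i j) s x) (v : E) :
    matrixFDerivWithin (fun q => A q * B q) s x v =
      matrixFDerivWithin A s x v * B x + A x * matrixFDerivWithin B s x v := by
  ext i j
  simp only [matrixFDerivWithin, of_apply, mul_apply, Matrix.add_apply]
  rw [fderivWithin_fun_sum hxs fun l _ => (hA i l).fun_mul (hB l j)]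
  simp [fderivWithin_fun_mul hxs (hA _ _) (hB _ _), Finset.sum_add_distrib, mul_comm, add_comm]

theorem matrixFDerivWithin_inv [Fintype m] [DecidableEq m] (hxs : UniqueDiffWithinAt 𝕜 s x)
    {M : E → Matrix m m 𝕜} (hM : ∀ i j, DifferentiableWithinAt 𝕜 (fun q => M q i j) s x)
    (hx : IsUnit (M x)) (v : E) :
    matrixFDerivWithin (fun q => (M q)⁻¹) s x v =
      -((M x)⁻¹ * matrixFDerivWithin M s x v * (M x)⁻¹) := by
  have hdet : IsUnit (M x).det := (isUnit_iff_isUnit_det _).mp hx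
  -- `M⁻¹ * M = 1` near `x`, since the determinant is continuous
  have hid : ∀ i j,
      (fun q => ((M q)⁻¹ * M q) i j) =ᶠ[𝓝[s] x] fun _ => (1 : Matrix m m 𝕜) i j := by
    intro i j
    filter_upwards [(DifferentiableWithinAt.matrix_det hM).continuousWithinAt.eventually_ne
      hdet.ne_zero] with q hq
    rw [nonsing_inv_mul _ hq.isUnit]
  have hzero : matrixFDerivWithin (fun q => (M q)⁻¹ * M q) s x v = 0 := by
    ext i j
    rw [matrixFDerivWithin, of_apply, (hid i j).fderivWithin_eq (by rw [nonsing_inv_mul _ hdet]),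
      fderivWithin_const_apply, _root_.zero_apply, Matrix.zero_apply]
  rw [matrixFDerivWithin_mul hxs (fun i j => .matrix_inv_apply hM hx i j) hM,
    add_eq_zero_iff_eq_neg] at hzero
  calc matrixFDerivWithin (fun q => (M q)⁻¹) s x v
      = matrixFDerivWithin (fun q => (M q)⁻¹) s x v * M x * (M x)⁻¹ := by
        rw [Matrix.mul_assoc, mul_nonsing_inv _ hdet, Matrix.mul_one]
    _ = -((M x)⁻¹ * matrixFDerivWithin M s x v * (M x)⁻¹) := by rw [hzero, Matrix.neg_mul]

end MatrixCalculus

section SecondDerivative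

variable {E F : Type*} [NormedAddCommGroup E] [NormedSpace ℝ E] [NormedAddCommGroup F]
  [NormedSpace ℝ F] {s : Set E} {x : E} {f : E → F}

theorem ContDiffOn.differentiableWithinAt_fderivWithin_apply (hf : ContDiffOn ℝ 2 f s)
    (hs : UniqueDiffOn ℝ s) (hx : x ∈ s) (v : E) :
    DifferentiableWithinAt ℝ (fun q => fderivWithin ℝ f s q v) s x :=
  (((hf.fderivWithin hs (m := 1) (by norm_num)).clm_apply contDiffOn_const) x hx
    ).differentiableWithinAt one_ne_zero

theorem fderivWithin_fderivWithin_apply_comm (hf : ContDiffOn ℝ 2 f s) (hs : UniqueDiffOn ℝ s)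
    (hx : x ∈ s) (hx' : x ∈ closure (interior s)) (v w : E) :
    fderivWithin ℝ (fun q => fderivWithin ℝ f s q v) s x w =
      fderivWithin ℝ (fun q => fderivWithin ℝ f s q w) s x v := by
  have hdf : DifferentiableWithinAt ℝ (fderivWithin ℝ f s) s x :=
    ((hf.fderivWithin hs (m := 1) (by norm_num)) x hx).differentiableWithinAt one_ne_zero
  have happly : ∀ u : E, fderivWithin ℝ (fun q => fderivWithin ℝ f s q u) s x =
      (fderivWithin ℝ (fderivWithin ℝ f s) s x).flip u := fun u => by
    simp [fderivWithin_clm_apply (hs x hx) hdf (differentiableWithinAt_const u)]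
  rw [happly, happly]
  exact (hf x hx).isSymmSndFDerivWithinAt (by simp) hs hx' hx w v

end SecondDerivative

theorem IsOpen.prod_Icc_subset_closure_interior {E : Type*} [TopologicalSpace E] {O : Set E}
    (hO : IsOpen O)
    {a b : ℝ} (hab : a < b) : O ×ˢ Set.Icc a b ⊆ closure (interior (O ×ˢ Set.Icc a b)) := by
  rw [interior_prod_eq, hO.interior_eq, interior_Icc, closure_prod_eq, closure_Ioo hab.ne]
  exact Set.prod_mono subset_closure le_rfl

-- With `N = Jᵀ G V` and `P = Jᵀ G J` this is `Vᵀ G + Jᵀ Ġ = -(N + Pᵀ Nᵀ - Nᵀ) Jᵀ G`,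
-- where `Ġ = -G (V Jᵀ + J Vᵀ) G` is the time derivative of `G = (J Jᵀ)⁻¹`.
theorem Matrix.tangential_commutator_identity {R m N : Type*} [CommRing R] [Fintype m]
    [DecidableEq m] [Fintype N]
    (J V : Matrix m N R) (G : Matrix m m R) (hG : G * (J * Jᵀ) = 1) (hGt : Gᵀ = G) :
    Vᵀ * G + Jᵀ * -(G * (V * Jᵀ + J * Vᵀ) * G) =
      -((Jᵀ * G * V + (Jᵀ * G * J)ᵀ * (Jᵀ * G * V)ᵀ - (Jᵀ * G * V)ᵀ) * (Jᵀ * G)) := by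
  have hcancel : G * (J * (Jᵀ * G)) = G := by
    rw [← Matrix.mul_assoc J, ← Matrix.mul_assoc, hG, Matrix.one_mul]
  simp only [transpose_mul, transpose_transpose, hGt, Matrix.mul_add, Matrix.add_mul,
    Matrix.sub_mul, Matrix.mul_neg, Matrix.mul_assoc, hcancel]
  abel

section MovingSurface

variable {n : ℕ} {S : Set ((Fin n → ℝ) × ℝ)} {p : (Fin n → ℝ) × ℝ} {ι : Type*}

noncomputable def thetaJacobian (S : Set ((Fin n → ℝ) × ℝ)) (F : (Fin n → ℝ) × ℝ → ι → ℝ)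
    (p : (Fin n → ℝ) × ℝ) : Matrix (Fin n) ι ℝ :=
  of fun i k => dtheta S (fun q => F q k) i p

noncomputable def dtimeFamily (S : Set ((Fin n → ℝ) × ℝ)) (F : (Fin n → ℝ) × ℝ → ι → ℝ)
    (p : (Fin n → ℝ) × ℝ) (k : ι) : ℝ :=
  dtime S (fun q => F q k) p

/-- The matrix `(D_l F^k)_{l,k}` of tangential gradients of a family of scalar functions. -/
noncomputable def tgradMat (S : Set ((Fin n → ℝ) × ℝ)) (X : (Fin n → ℝ) × ℝ → Fin (n + 1) → ℝ)
    (F : (Fin n → ℝ) × ℝ → ι → ℝ) (p : (Fin n → ℝ) × ℝ) : Matrix (Fin (n + 1)) ι ℝ :=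
  (thetaJacobian S X p)ᵀ * (metricMat S X p)⁻¹ * thetaJacobian S F p

theorem metricMat_eq_thetaJacobian_mul_transpose (X : (Fin n → ℝ) × ℝ → Fin (n + 1) → ℝ) :
    metricMat S X p = thetaJacobian S X p * (thetaJacobian S X p)ᵀ :=
  rfl

theorem tgrad_eq_tgradMat (X : (Fin n → ℝ) × ℝ → Fin (n + 1) → ℝ)
    (F : (Fin n → ℝ) × ℝ → ι → ℝ) (k : ι) (l : Fin (n + 1)) :
    tgrad S X (fun q => F q k) l p = tgradMat S X F p l k := by
  simp only [tgrad, tgradMat, thetaJacobian, mul_apply, transpose_apply, of_apply, Finset.sum_mul]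
  rw [Finset.sum_comm]
  exact Finset.sum_congr rfl fun i _ => Finset.sum_congr rfl fun j _ => by ring

theorem tproj_eq_tgradMat (X : (Fin n → ℝ) × ℝ → Fin (n + 1) → ℝ) (s l : Fin (n + 1)) :
    tproj S X s l p = tgradMat S X X p s l := by
  rw [← tgrad_eq_tgradMat]
  exact Finset.sum_congr rfl fun i _ => Finset.sum_congr rfl fun j _ => mul_right_comm _ _ _

theorem differentiableWithinAt_thetaJacobian_apply {F : (Fin n → ℝ) × ℝ → ι → ℝ}
    (hF : ∀ k, ContDiffOn ℝ 2 (fun q => F q k) S) (hS : UniqueDiffOn ℝ S) (hp : p ∈ S)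
    (i : Fin n) (k : ι) : DifferentiableWithinAt ℝ (fun q => thetaJacobian S F q i k) S p :=
  (hF k).differentiableWithinAt_fderivWithin_apply hS hp (Pi.single i 1, 0)

theorem matrixFDerivWithin_thetaJacobian {F : (Fin n → ℝ) × ℝ → ι → ℝ}
    (hF : ∀ k, ContDiffOn ℝ 2 (fun q => F q k) S) (hS : UniqueDiffOn ℝ S) (hp : p ∈ S)
    (hp' : p ∈ closure (interior S)) :
    matrixFDerivWithin (thetaJacobian S F) S p (0, 1) = thetaJacobian S (dtimeFamily S F) p := by
  ext i k
  exact fderivWithin_fderivWithin_apply_comm (hF k) hS hp hp' (Pi.single i 1, 0) (0, 1)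

theorem matrixFDerivWithin_tgradMat {X : (Fin n → ℝ) × ℝ → Fin (n + 1) → ℝ}
    {F : (Fin n → ℝ) × ℝ → ι → ℝ} (hS : UniqueDiffOn ℝ S) (hp : p ∈ S)
    (hp' : p ∈ closure (interior S)) (hX : ContDiffOn ℝ 2 X S)
    (hF : ∀ k, ContDiffOn ℝ 2 (fun q => F q k) S) (hg : IsUnit (metricMat S X p)) :
    matrixFDerivWithin (tgradMat S X F) S p (0, 1) =
      tgradMat S X (dtimeFamily S F) p -
        (tgradMat S X (dtimeFamily S X) p
          + (tgradMat S X X p)ᵀ * (tgradMat S X (dtimeFamily S X) p)ᵀ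
          - (tgradMat S X (dtimeFamily S X) p)ᵀ) * tgradMat S X F p := by
  have hXk : ∀ k, ContDiffOn ℝ 2 (fun q => X q k) S := contDiffOn_pi.mp hX
  have hJ := differentiableWithinAt_thetaJacobian_apply hXk hS hp
  have hJt : ∀ i j, DifferentiableWithinAt ℝ (fun q => (thetaJacobian S X q)ᵀ i j) S p :=
    fun i j => hJ j i
  have hK := differentiableWithinAt_thetaJacobian_apply hF hS hp
  have hg' : ∀ i j, DifferentiableWithinAt ℝ (fun q => metricMat S X q i j) S p :=
    DifferentiableWithinAt.matrix_mul_apply hJ hJt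
  have hG : (metricMat S X p)⁻¹ * (thetaJacobian S X p * (thetaJacobian S X p)ᵀ) = 1 :=
    nonsing_inv_mul _ ((isUnit_iff_isUnit_det _).mp hg)
  have hGt : ((metricMat S X p)⁻¹)ᵀ = (metricMat S X p)⁻¹ := by
    rw [transpose_nonsing_inv, metricMat_eq_thetaJacobian_mul_transpose, transpose_mul,
      transpose_transpose]
  have hdg : matrixFDerivWithin (metricMat S X) S p (0, 1) =
      thetaJacobian S (dtimeFamily S X) p * (thetaJacobian S X p)ᵀ
        + thetaJacobian S X p * (thetaJacobian S (dtimeFamily S X) p)ᵀ := by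
    rw [show metricMat S X = fun q => thetaJacobian S X q * (thetaJacobian S X q)ᵀ from
        funext fun _ => metricMat_eq_thetaJacobian_mul_transpose X,
      matrixFDerivWithin_mul (hS p hp) hJ hJt, matrixFDerivWithin_transpose,
      matrixFDerivWithin_thetaJacobian hXk hS hp hp']
  unfold tgradMat
  rw [matrixFDerivWithin_mul (hS p hp)
      (DifferentiableWithinAt.matrix_mul_apply hJt fun i j => .matrix_inv_apply hg' hg i j) hK,
    matrixFDerivWithin_mul (hS p hp) hJt fun i j => .matrix_inv_apply hg' hg i j,
    matrixFDerivWithin_transpose, matrixFDerivWithin_inv (hS p hp) hg' hg,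
    hdg, matrixFDerivWithin_thetaJacobian hXk hS hp hp',
    matrixFDerivWithin_thetaJacobian hF hS hp hp',
    Matrix.tangential_commutator_identity _ _ _ hG hGt]
  rw [Matrix.neg_mul, Matrix.mul_assoc]
  abel

end MovingSurface

/-- Commutation of the material time derivative with the tangential gradient on a moving
parametrized hypersurface:
`∂_t (D_l U) = D_l (∂_t U) − Σ_r A_{lr} D_r U` with
`A_{lr} = D_l V^r + Σ_s P_{sl} D_r V^s − D_r V^l`, where `V = ∂_t X`. -/
theorem material_derivative_commutes_with_tangential_gradient {n : ℕ}
    (O : Set (Fin n → ℝ)) (hO : IsOpen O) (T : ℝ) (hT : 0 < T)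
    (X : (Fin n → ℝ) × ℝ → Fin (n + 1) → ℝ) (U : (Fin n → ℝ) × ℝ → ℝ)
    (S : Set ((Fin n → ℝ) × ℝ)) (hS : S = O ×ˢ Set.Icc 0 T)
    (hX : ContDiffOn ℝ 2 X S) (hU : ContDiffOn ℝ 2 U S)
    (hinv : ∀ p ∈ S, IsUnit (metricMat S X p)) :
    ∀ p ∈ S, ∀ l : Fin (n + 1),
      dtime S (fun q => tgrad S X U l q) p =
        tgrad S X (fun q => dtime S U q) l p
          - ∑ r,
              (tgrad S X (fun q => dtime S (fun q' => X q' r) q) l p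
                + (∑ s, tproj S X s l p * tgrad S X (fun q => dtime S (fun q' => X q' s) q) r p)
                - tgrad S X (fun q => dtime S (fun q' => X q' l) q) r p)
              * tgrad S X U r p := by
  intro p hp l
  have hSu : UniqueDiffOn ℝ S := hS ▸ hO.uniqueDiffOn.prod (uniqueDiffOn_Icc hT)
  have hp' : p ∈ closure (interior S) := by
    subst hS
    exact hO.prod_Icc_subset_closure_interior hT hp
  have hmat := congrFun (congrFun (matrixFDerivWithin_tgradMat (F := fun q (_ : Unit) => U q)
    hSu hp hp' hX (fun _ => hU) (hinv p hp)) l) ()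
  have hLHS :
      (fun q => tgrad S X U l q) = fun q => tgradMat S X (fun q (_ : Unit) => U q) q l () :=
    funext fun q => tgrad_eq_tgradMat X (fun q (_ : Unit) => U q) () l
  rw [hLHS]
  refine hmat.trans ?_
  simp only [Matrix.sub_apply, mul_apply, Matrix.add_apply, transpose_apply, tproj_eq_tgradMat,
    ← tgrad_eq_tgradMat, dtimeFamily]
end

section
/- Let T > 0, let A : [0,T] → Matrix (n+1) (n+1) ℝ be continuous, and let B₀ be a symmetric (n+1)×(n+1) real matrix that is positive definite, i.e. B₀ ξ · ξ ≥ d₀ |ξ|² for all ξ ∈ ℝ^{n+1} with some d₀ > 0. Then there exists λ₀ ≥ 0 such that for every λ ≥ λ₀ the solution B : [0,T] → Matrix (n+1) (n+1) ℝ of B'(t) = B(t) A(t) + A(t)ᵀ B(t) + λ B(t), B(0) = B₀, is symmetric and positive definite for every t ∈ [0,T] (i.e. B(t) ξ · ξ > 0 for every ξ ≠ 0). -/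
/-! Symmetry: `B - Bᵀ` solves the same linear equation with zero initial value, so it vanishes
by Grönwall. Positivity: by Jacobi's formula `(det B)' = (2 tr A + (n + 1) λ) det B`, so
`det B` never vanishes, as `det B₀ > 0`. A continuous path of symmetric matrices with nonvanishing
determinant that starts positive definite stays positive definite: the times where it is positive
semidefinite form a closed set, positive definiteness is an open condition, and a positive
semidefinite matrix with nonzero determinant is positive definite. Hence `λ₀ = 0` already works. -/

open Matrix Set Filter Topology

theorem eq_zero_of_norm_deriv_le_mul_norm_of_eq_zero {E : Type*} [NormedAddCommGroup E]
    [NormedSpace ℝ E] {f f' : ℝ → E} {K a b c : ℝ}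
    (hf : ∀ t ∈ Icc a b, HasDerivWithinAt f (f' t) (Icc a b) t)
    (bound : ∀ t ∈ Icc a b, ‖f' t‖ ≤ K * ‖f t‖) (hc : c ∈ Icc a b) (hfc : f c = 0) :
    ∀ t ∈ Icc a b, f t = 0 := by
  intro t ht
  rcases le_total c t with hct | htc
  · refine eq_zero_of_abs_deriv_le_mul_abs_self_of_eq_zero_right
      (fun s hs => (hf s ⟨hc.1.trans hs.1, hs.2⟩).continuousWithinAt.mono
        (Icc_subset_Icc_left hc.1))
      (fun s hs => (hf s ⟨hc.1.trans hs.1, hs.2.le⟩).mono_of_mem_nhdsWithin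
        (Icc_mem_nhdsGE_of_mem ⟨hc.1.trans hs.1, hs.2⟩))
      hfc (fun s hs => bound s ⟨hc.1.trans hs.1, hs.2.le⟩) t ⟨hct, ht.2⟩
  · -- Run the same argument forward in time for `s ↦ f (-s)` on `[-c, -a]`.
    have hneg : MapsTo Neg.neg (Icc (-c) (-a)) (Icc a b) := fun s hs =>
      ⟨le_neg.1 hs.2, (neg_le.1 hs.1).trans hc.2⟩
    have := eq_zero_of_abs_deriv_le_mul_abs_self_of_eq_zero_right (f := f ∘ Neg.neg)
      (f' := fun s => -f' (-s)) (K := K)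
      (fun s hs => (hf (-s) (hneg hs)).continuousWithinAt.comp
        continuous_neg.continuousWithinAt hneg)
      (fun s hs => by
        have hs' : -s ∈ Ioc a b := ⟨lt_neg.1 hs.2, (neg_le.1 hs.1).trans hc.2⟩
        have := ((hf (-s) (Ioc_subset_Icc_self hs')).mono_of_mem_nhdsWithin
          (Icc_mem_nhdsLE_of_mem hs')).scomp s (hasDerivAt_neg s).hasDerivWithinAt
          (fun u hu => neg_le_neg (mem_Ici.1 hu))
        simpa using this)
      (by simpa using hfc)
      (fun s hs => by simpa using bound (-s) (hneg (Ico_subset_Icc_self hs)))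
      (-t) ⟨neg_le_neg htc, neg_le_neg ht.1⟩
    simpa using this

namespace Matrix

section Algebra

variable {R n : Type*} [CommRing R] [Fintype n] [DecidableEq n]

theorem det_updateRow_eq_sum_mul_adjugate (M : Matrix n n R) (i : n) (x : n → R) :
    (M.updateRow i x).det = ∑ j, x j * M.adjugate j i := by
  rw [← cramer_transpose_apply, cramer_eq_adjugate_mulVec, ← adjugate_transpose]
  simp [mulVec, dotProduct, mul_comm]

theorem trace_lyapunov_mul_adjugate (M A : Matrix n n R) (lam : R) :
    ((M * A + Aᵀ * M + lam • M) * M.adjugate).trace =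
      (2 * A.trace + Fintype.card n * lam) * M.det := by
  have hMA : (M * A * M.adjugate).trace = M.det * A.trace := by
    rw [trace_mul_cycle, adjugate_mul, smul_mul, one_mul, trace_smul, smul_eq_mul]
  have hAM : (Aᵀ * M * M.adjugate).trace = M.det * A.trace := by
    rw [Matrix.mul_assoc, mul_adjugate, Matrix.mul_smul, Matrix.mul_one, trace_smul,
      trace_transpose, smul_eq_mul]
  have hM : (lam • M * M.adjugate).trace = lam * (M.det * Fintype.card n) := by
    rw [smul_mul, mul_adjugate, trace_smul, trace_smul, trace_one, smul_eq_mul, smul_eq_mul]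
  rw [add_mul, add_mul, trace_add, trace_add, hMA, hAM, hM]
  ring

end Algebra

open scoped Matrix.Norms.Elementwise in
theorem norm_mul_le_card_mul {l m n : Type*} [Fintype l] [Fintype m] [Fintype n]
    (A : Matrix l m ℝ) (B : Matrix m n ℝ) : ‖A * B‖ ≤ Fintype.card m * (‖A‖ * ‖B‖) := by
  refine (norm_le_iff (by positivity)).2 fun i j => ?_
  rw [mul_apply]
  calc ‖∑ k, A i k * B k j‖ ≤ ∑ k, ‖A i k‖ * ‖B k j‖ :=
        norm_sum_le_of_le _ fun k _ => norm_mul_le _ _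
    _ ≤ ∑ _k : m, ‖A‖ * ‖B‖ := by
        gcongr
        · exact norm_entry_le_entrywise_sup_norm A
        · exact norm_entry_le_entrywise_sup_norm B
    _ = Fintype.card m * (‖A‖ * ‖B‖) := by simp

variable {n : Type*} [Fintype n]

theorem hasDerivWithinAt_det [DecidableEq n] {B : ℝ → Matrix n n ℝ} {B' : Matrix n n ℝ}
    {s : Set ℝ} {t : ℝ} (hB : ∀ i j, HasDerivWithinAt (fun u => B u i j) (B' i j) s t) :
    HasDerivWithinAt (fun u => (B u).det) (B' * (B t).adjugate).trace s t := by
  let detRows : ContinuousMultilinearMap ℝ (fun _ : n => n → ℝ) ℝ :=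
    { (detRowAlternating : (n → ℝ) [⋀^n]→ₗ[ℝ] ℝ).toMultilinearMap with
      cont := (continuous_id (X := Matrix n n ℝ)).matrix_det }
  have hrows : ∀ i, HasFDerivWithinAt (fun u => B u i)
      ((1 : ℝ →L[ℝ] ℝ).smulRight (B' i)) s t :=
    fun i => (hasDerivWithinAt_pi.2 fun j => hB i j).hasFDerivWithinAt
  have h := (HasFDerivWithinAt.multilinear_comp detRows hrows).hasDerivWithinAt
  simp only [_root_.sum_apply, ContinuousLinearMap.comp_apply,
    ContinuousLinearMap.smulRight_apply, one_apply_eq_self, one_smul,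
    ContinuousMultilinearMap.toContinuousLinearMap_apply] at h
  have htrace : (B' * (B t).adjugate).trace = ∑ i, ((B t).updateRow i (B' i)).det := by
    simp only [det_updateRow_eq_sum_mul_adjugate, trace, diag, mul_apply]
  rw [htrace]
  exact h

theorem posDef_of_isSymm_of_coercive {M : Matrix n n ℝ} {d : ℝ} (hM : M.IsSymm) (hd : 0 < d)
    (hcoercive : ∀ ξ : n → ℝ, d * ∑ i, ξ i ^ 2 ≤ ξ ⬝ᵥ M *ᵥ ξ) : M.PosDef := by
  refine posDef_iff_dotProduct_mulVec.2 ⟨hM, fun ξ hξ => ?_⟩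
  obtain ⟨i, hi⟩ := Function.ne_iff.1 hξ
  have hsum : 0 < ∑ i, ξ i ^ 2 :=
    Finset.sum_pos' (fun i _ => sq_nonneg _) ⟨i, Finset.mem_univ i, pow_two_pos_of_ne_zero hi⟩
  simpa using (mul_pos hd hsum).trans_le (hcoercive ξ)

theorem eventually_forall_dotProduct_mulVec_pos {M : Matrix n n ℝ}
    (hM : ∀ ξ : n → ℝ, ξ ≠ 0 → 0 < ξ ⬝ᵥ M *ᵥ ξ) :
    ∀ᶠ N in 𝓝 M, ∀ ξ : n → ℝ, ξ ≠ 0 → 0 < ξ ⬝ᵥ N *ᵥ ξ := by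
  have hsphere : ∀ᶠ N in 𝓝 M, ∀ ξ ∈ Metric.sphere (0 : n → ℝ) 1, 0 < ξ ⬝ᵥ N *ᵥ ξ := by
    refine (isCompact_sphere 0 1).eventually_forall_of_forall_eventually fun ξ hξ => ?_
    have hcont : Continuous fun p : Matrix n n ℝ × (n → ℝ) => p.2 ⬝ᵥ p.1 *ᵥ p.2 :=
      continuous_snd.dotProduct (continuous_fst.matrix_mulVec continuous_snd)
    exact continuousAt_const.eventually_lt hcont.continuousAt
      (hM ξ (ne_zero_of_mem_unit_sphere ⟨ξ, hξ⟩))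
  filter_upwards [hsphere] with N hN ξ hξ
  have hnorm : 0 < ‖ξ‖ := norm_pos_iff.2 hξ
  have h := hN (‖ξ‖⁻¹ • ξ) (by simp [norm_smul, hnorm.ne'])
  rw [mulVec_smul, dotProduct_smul, smul_dotProduct, smul_eq_mul, smul_eq_mul] at h
  exact pos_of_mul_pos_right (pos_of_mul_pos_right h (inv_pos.2 hnorm).le) (inv_pos.2 hnorm).le

theorem isClosed_setOf_forall_dotProduct_mulVec_nonneg :
    IsClosed {N : Matrix n n ℝ | ∀ ξ : n → ℝ, 0 ≤ ξ ⬝ᵥ N *ᵥ ξ} := by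
  simp only [ofPred_forall]
  exact isClosed_iInter fun ξ => isClosed_le continuous_const
    (continuous_const.dotProduct (continuous_id.matrix_mulVec continuous_const))

theorem posDef_of_continuousOn_of_det_ne_zero [DecidableEq n] {B : ℝ → Matrix n n ℝ} {a b : ℝ}
    (hB : ContinuousOn B (Icc a b)) (hherm : ∀ t ∈ Icc a b, (B t).IsHermitian)
    (hdet : ∀ t ∈ Icc a b, (B t).det ≠ 0) (ha : (B a).PosDef) :
    ∀ t ∈ Icc a b, (B t).PosDef := by
  let S := {t | ∀ ξ : n → ℝ, 0 ≤ ξ ⬝ᵥ B t *ᵥ ξ}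
  have posDef_of_mem : ∀ t ∈ S ∩ Icc a b, (B t).PosDef := fun t ⟨hS, ht⟩ =>
    ((posSemidef_iff_dotProduct_mulVec.2 ⟨hherm t ht, fun ξ => by simpa using hS ξ⟩
      ).posDef_iff_det_ne_zero).2 (hdet t ht)
  have hclosed : IsClosed (S ∩ Icc a b) := by
    rw [inter_comm]
    exact hB.preimage_isClosed_of_isClosed isClosed_Icc
      isClosed_setOf_forall_dotProduct_mulVec_nonneg
  have hsub : Icc a b ⊆ S := by
    refine hclosed.Icc_subset_of_forall_mem_nhdsWithin (fun ξ => ?_) fun t ht => ?_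
    · simpa using ha.posSemidef.dotProduct_mulVec_nonneg ξ
    · have hpos := eventually_forall_dotProduct_mulVec_pos (by simpa using
        (posDef_iff_dotProduct_mulVec.1 (posDef_of_mem t ⟨ht.1, Ico_subset_Icc_self ht.2⟩)).2)
      have hlim : Tendsto B (𝓝[>] t) (𝓝 (B t)) :=
        (hB t (Ico_subset_Icc_self ht.2)).tendsto.mono_left
          (nhdsWithin_le_of_mem (Icc_mem_nhdsGT_of_mem ht.2))
      filter_upwards [hlim hpos] with s hs ξ
      rcases eq_or_ne ξ 0 with rfl | hξ
      · simp
      · exact (hs ξ hξ).le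
  exact fun t ht => posDef_of_mem t ⟨hsub ht, ht⟩

end Matrix

section LyapunovODE

variable {n : Type*} [Fintype n]

def SolvesLyapunovODE (A B : ℝ → Matrix n n ℝ) (lam : ℝ) (s : Set ℝ) : Prop :=
  ∀ t ∈ s, ∀ i j, HasDerivWithinAt (fun u => B u i j)
    ((B t * A t + (A t)ᵀ * B t + lam • B t) i j) s t

namespace SolvesLyapunovODE

variable {A B C : ℝ → Matrix n n ℝ} {lam a b c : ℝ} {s : Set ℝ}

theorem continuousOn (h : SolvesLyapunovODE A B lam s) : ContinuousOn B s := fun t ht =>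
  continuousWithinAt_pi.2 fun i => continuousWithinAt_pi.2 fun j => (h t ht i j).continuousWithinAt

theorem transpose (h : SolvesLyapunovODE A B lam s) :
    SolvesLyapunovODE A (fun t => (B t)ᵀ) lam s := fun t ht i j => by
  have hrhs : (B t)ᵀ * A t + (A t)ᵀ * (B t)ᵀ + lam • (B t)ᵀ =
      (B t * A t + (A t)ᵀ * B t + lam • B t)ᵀ := by
    simp only [transpose_add, transpose_mul, transpose_smul, transpose_transpose]
    abel
  simpa only [hrhs, transpose_apply] using h t ht j i

theorem sub (hB : SolvesLyapunovODE A B lam s) (hC : SolvesLyapunovODE A C lam s) :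
    SolvesLyapunovODE A (fun t => B t - C t) lam s := fun t ht i j => by
  have hrhs : (B t - C t) * A t + (A t)ᵀ * (B t - C t) + lam • (B t - C t) =
      (B t * A t + (A t)ᵀ * B t + lam • B t) - (C t * A t + (A t)ᵀ * C t + lam • C t) := by
    simp only [Matrix.sub_mul, Matrix.mul_sub, smul_sub]
    abel
  rw [hrhs, Matrix.sub_apply]
  exact (hB t ht i j).sub (hC t ht i j)

open scoped Matrix.Norms.Elementwise in
theorem eq_zero (hA : ContinuousOn A (Icc a b)) (h : SolvesLyapunovODE A B lam (Icc a b))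
    (hc : c ∈ Icc a b) (hBc : B c = 0) : ∀ t ∈ Icc a b, B t = 0 := by
  obtain ⟨K, hK⟩ := isCompact_Icc.exists_bound_of_continuousOn hA
  refine eq_zero_of_norm_deriv_le_mul_norm_of_eq_zero
    (fun t ht => hasDerivWithinAt_pi.2 fun i => hasDerivWithinAt_pi.2 fun j => h t ht i j)
    (K := 2 * Fintype.card n * K + ‖lam‖) (fun t ht => ?_) hc hBc
  calc ‖B t * A t + (A t)ᵀ * B t + lam • B t‖
      ≤ Fintype.card n * (‖B t‖ * ‖A t‖) + Fintype.card n * (‖(A t)ᵀ‖ * ‖B t‖) + ‖lam‖ * ‖B t‖ :=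
        (norm_add₃_le).trans (add_le_add_three (norm_mul_le_card_mul _ _)
          (norm_mul_le_card_mul _ _) (norm_smul_le _ _))
    _ ≤ (2 * Fintype.card n * K + ‖lam‖) * ‖B t‖ := by
        have hBA : Fintype.card n * (‖B t‖ * ‖A t‖) ≤ Fintype.card n * (‖B t‖ * K) := by
          gcongr
          exact hK t ht
        rw [norm_transpose]
        linarith

theorem isSymm (hA : ContinuousOn A (Icc a b)) (h : SolvesLyapunovODE A B lam (Icc a b))
    (hc : c ∈ Icc a b) (hBc : (B c).IsSymm) : ∀ t ∈ Icc a b, (B t).IsSymm := fun t ht =>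
  sub_eq_zero.1 ((h.transpose.sub h).eq_zero hA hc (sub_eq_zero.2 hBc) t ht)

variable [DecidableEq n]

theorem hasDerivWithinAt_det (h : SolvesLyapunovODE A B lam s) {t : ℝ} (ht : t ∈ s) :
    HasDerivWithinAt (fun u => (B u).det)
      ((2 * (A t).trace + Fintype.card n * lam) * (B t).det) s t := by
  simpa only [trace_lyapunov_mul_adjugate] using Matrix.hasDerivWithinAt_det (h t ht)

theorem det_ne_zero (hA : ContinuousOn A (Icc a b)) (h : SolvesLyapunovODE A B lam (Icc a b))
    (hc : c ∈ Icc a b) (hBc : (B c).det ≠ 0) : ∀ t ∈ Icc a b, (B t).det ≠ 0 := by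
  have hrate : ContinuousOn (fun t => 2 * (A t).trace + Fintype.card n * lam) (Icc a b) :=
    (continuousOn_const.mul (continuous_id.matrix_trace.comp_continuousOn hA)).add
      continuousOn_const
  obtain ⟨K, hK⟩ := isCompact_Icc.exists_bound_of_continuousOn hrate
  intro t ht hBt
  refine hBc (eq_zero_of_norm_deriv_le_mul_norm_of_eq_zero
    (fun u hu => h.hasDerivWithinAt_det hu) (K := K) (fun u hu => ?_) ht hBt c hc)
  rw [norm_mul]
  exact mul_le_mul_of_nonneg_right (hK u hu) (norm_nonneg _)

end SolvesLyapunovODE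

end LyapunovODE

theorem matrix_ode_positive_definite_general {n : ℕ} (T : ℝ)
    (A : ℝ → Matrix (Fin (n + 1)) (Fin (n + 1)) ℝ)
    (hA : ContinuousOn A (Set.Icc 0 T))
    (B₀ : Matrix (Fin (n + 1)) (Fin (n + 1)) ℝ) (hB₀symm : B₀.IsSymm)
    (d₀ : ℝ) (hd₀ : 0 < d₀)
    (hB₀coercive : ∀ ξ : Fin (n + 1) → ℝ, d₀ * ∑ i, ξ i ^ 2 ≤ ξ ⬝ᵥ B₀.mulVec ξ) :
    ∃ lam₀ : ℝ, 0 ≤ lam₀ ∧ ∀ lam : ℝ, lam₀ ≤ lam →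
      ∀ B : ℝ → Matrix (Fin (n + 1)) (Fin (n + 1)) ℝ,
        B 0 = B₀ →
        (∀ t ∈ Set.Icc 0 T, ∀ i j : Fin (n + 1),
          HasDerivWithinAt (fun s => B s i j)
            ((B t * A t + (A t)ᵀ * B t + lam • B t) i j) (Set.Icc 0 T) t) →
        ∀ t ∈ Set.Icc 0 T,
          (B t).IsSymm ∧ ∀ ξ : Fin (n + 1) → ℝ, ξ ≠ 0 → 0 < ξ ⬝ᵥ (B t).mulVec ξ := by
  refine ⟨0, le_rfl, fun lam _ B hB0 hB t ht => ?_⟩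
  have hB : SolvesLyapunovODE A B lam (Icc 0 T) := hB
  have h0 : (0 : ℝ) ∈ Icc 0 T := ⟨le_rfl, ht.1.trans ht.2⟩
  have hB₀pd := posDef_of_isSymm_of_coercive hB₀symm hd₀ hB₀coercive
  subst hB0
  have hsymm := hB.isSymm hA h0 hB₀symm
  have hpd := posDef_of_continuousOn_of_det_ne_zero hB.continuousOn
    (fun t ht => isHermitian_iff_isSymm.2 (hsymm t ht))
    (hB.det_ne_zero hA h0 hB₀pd.det_pos.ne') hB₀pd t ht
  exact ⟨hsymm t ht, fun ξ hξ => by simpa using (posDef_iff_dotProduct_mulVec.1 hpd).2 hξ⟩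

/-- If `B₀` is symmetric and coercive (`B₀ ξ · ξ ≥ d₀ |ξ|²` with `d₀ > 0`), then there is a
`λ₀ ≥ 0` such that for every `λ ≥ λ₀` any solution of the linear matrix ODE
`B' = B A + Aᵀ B + λ B`, `B(0) = B₀`, stays symmetric and positive definite on `[0,T]`. -/
theorem matrix_ode_positive_definite {n : ℕ} (T : ℝ) (hT : 0 < T)
    (A : ℝ → Matrix (Fin (n + 1)) (Fin (n + 1)) ℝ)
    (hA : ContinuousOn A (Set.Icc 0 T))
    (B₀ : Matrix (Fin (n + 1)) (Fin (n + 1)) ℝ) (hB₀symm : B₀.IsSymm)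
    (d₀ : ℝ) (hd₀ : 0 < d₀)
    (hB₀coercive : ∀ ξ : Fin (n + 1) → ℝ, d₀ * ∑ i, ξ i ^ 2 ≤ ξ ⬝ᵥ B₀.mulVec ξ) :
    ∃ lam₀ : ℝ, 0 ≤ lam₀ ∧ ∀ lam : ℝ, lam₀ ≤ lam →
      ∀ B : ℝ → Matrix (Fin (n + 1)) (Fin (n + 1)) ℝ,
        B 0 = B₀ →
        (∀ t ∈ Set.Icc 0 T, ∀ i j : Fin (n + 1),
          HasDerivWithinAt (fun s => B s i j)
            ((B t * A t + (A t)ᵀ * B t + lam • B t) i j) (Set.Icc 0 T) t) →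
        ∀ t ∈ Set.Icc 0 T,
          (B t).IsSymm ∧ ∀ ξ : Fin (n + 1) → ℝ, ξ ≠ 0 → 0 < ξ ⬝ᵥ (B t).mulVec ξ :=
  matrix_ode_positive_definite_general T A hA B₀ hB₀symm d₀ hd₀ hB₀coercive
end

section
/- Let U ⊆ ℝ³ be open and let ν : U → ℝ³ be a C¹ vector field with |ν(x)| = 1 for all x ∈ U whose Jacobian is symmetric, i.e. ∂_i ν_j = ∂_j ν_i on U. Let h : U → ℝ be C² and define the vector field f := ν × ∇h (cross product). Then the tangential divergence of f vanishes: Σ_{i=1}^{3} D_i f_i = 0 on U, where D_i g := ∂_i g − ν_i Σ_{l=1}^{3} ν_l ∂_l g. -/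
/-! Differentiating `|ν|² = 1` gives `ν ⬝ᵥ Dν w = 0` for every `w`; since `Dν` is symmetric this
says `Dν ν = 0`, i.e. `ν` is constant along its own flow. The tangential divergence of `f` is
`div f − ν ⬝ᵥ Df ν`, and `Df ν = Dν ν × ∇h + ν × D²h ν = ν × D²h ν` is orthogonal to `ν`. Finally
`div (ν × ∇h) = ∇h ⬝ᵥ curl ν − ν ⬝ᵥ curl ∇h` vanishes because `Dν` and `D²h` are symmetric. -/

open Matrix
open scoped BigOperators

/-- Euclidean partial derivative `∂ᵢ g (x)` of a scalar function on `ℝ^m`. -/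
noncomputable def pder {m : ℕ} (g : (Fin m → ℝ) → ℝ) (i : Fin m) (x : Fin m → ℝ) : ℝ :=
  fderiv ℝ g x (Pi.single i 1)

/-- Tangential derivative `D_i g := ∂_i g − ν_i Σ_l ν_l ∂_l g` relative to the unit field `ν`. -/
noncomputable def tder {m : ℕ} (ν : (Fin m → ℝ) → Fin m → ℝ)
    (g : (Fin m → ℝ) → ℝ) (i : Fin m) (x : Fin m → ℝ) : ℝ :=
  pder g i x - ν x i * ∑ l, ν x l * pder g l x

/-- The gradient `∇h` of a scalar function on `ℝ³`. -/
noncomputable def grad3 (h : (Fin 3 → ℝ) → ℝ) (x : Fin 3 → ℝ) : Fin 3 → ℝ :=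
  fun l => pder h l x

section CrossProduct

variable {𝕜 : Type*} [NontriviallyNormedField 𝕜] [CompleteSpace 𝕜]
  {E : Type*} [NormedAddCommGroup E] [NormedSpace 𝕜 E] {u v : E → Fin 3 → 𝕜} {x : E}

theorem DifferentiableAt.crossProduct (hu : DifferentiableAt 𝕜 u x)
    (hv : DifferentiableAt 𝕜 v x) : DifferentiableAt 𝕜 (fun y => u y ⨯₃ v y) x :=
  ((_root_.crossProduct (R := 𝕜)).toContinuousBilinearMap.hasFDerivAt_of_bilinear
    hu.hasFDerivAt hv.hasFDerivAt).differentiableAt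

theorem fderiv_crossProduct_apply (hu : DifferentiableAt 𝕜 u x)
    (hv : DifferentiableAt 𝕜 v x) (w : E) :
    fderiv 𝕜 (fun y => u y ⨯₃ v y) x w = fderiv 𝕜 u x w ⨯₃ v x + u x ⨯₃ fderiv 𝕜 v x w := by
  have h := (crossProduct (R := 𝕜)).toContinuousBilinearMap.fderiv_of_bilinear hu hv
  simp only [LinearMap.toContinuousBilinearMap_apply] at h
  simp [h, add_comm]

end CrossProduct

theorem dotProduct_fderiv_eq_zero_of_eventually_dotProduct_self_eq_one
    {E ι : Type*} [NormedAddCommGroup E] [NormedSpace ℝ E] [Fintype ι] {u : E → ι → ℝ} {x : E}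
    (hu : DifferentiableAt ℝ u x) (hunit : (fun y => u y ⬝ᵥ u y) =ᶠ[nhds x] fun _ => 1) (w : E) :
    u x ⬝ᵥ fderiv ℝ u x w = 0 := by
  have hderiv := congrArg (· w)
    ((dotProductBilin ℝ ℝ).toContinuousBilinearMap.fderiv_of_bilinear hu hu)
  simp only [LinearMap.toContinuousBilinearMap_apply, dotProductBilin_apply_apply,
    hunit.fderiv_eq] at hderiv
  simp [dotProduct_comm (fderiv ℝ u x w)] at hderiv
  linarith

section LinearAlgebra

variable {R ι : Type*} [CommRing R] [Fintype ι] [DecidableEq ι]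

theorem LinearMap.map_eq_zero_of_isSymm_of_dotProduct_map_eq_zero
    {A : (ι → R) →ₗ[R] ι → R} (hA : (LinearMap.toMatrix' A).IsSymm) {v : ι → R}
    (hv : ∀ w, v ⬝ᵥ A w = 0) : A v = 0 := by
  rw [← LinearMap.toMatrix'_mulVec, ← hA.eq, mulVec_transpose]
  ext j
  have hj := hv (Pi.single j 1)
  rwa [← LinearMap.toMatrix'_mulVec, dotProduct_mulVec, dotProduct_single, mul_one] at hj

theorem LinearMap.sum_map_single_cross_apply_eq_zero_of_isSymm
    {A : (Fin 3 → R) →ₗ[R] Fin 3 → R} (hA : (LinearMap.toMatrix' A).IsSymm) (w : Fin 3 → R) :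
    ∑ i, (A (Pi.single i 1) ⨯₃ w) i = 0 := by
  have hsymm : ∀ i j, A (Pi.single i 1) j = A (Pi.single j 1) i := fun i j => by
    simpa using hA.apply i j
  simp only [Fin.sum_univ_three, cross_apply, cons_val_zero, cons_val_one, cons_val]
  linear_combination (w 2) * hsymm 0 1 + w 1 * hsymm 2 0 + w 0 * hsymm 1 2

theorem LinearMap.sum_cross_map_single_apply_eq_zero_of_isSymm
    {A : (Fin 3 → R) →ₗ[R] Fin 3 → R} (hA : (LinearMap.toMatrix' A).IsSymm) (w : Fin 3 → R) :
    ∑ i, (w ⨯₃ A (Pi.single i 1)) i = 0 := by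
  simp_rw [← cross_anticomm _ w, Pi.neg_apply, Finset.sum_neg_distrib,
    A.sum_map_single_cross_apply_eq_zero_of_isSymm hA, neg_zero]

end LinearAlgebra

section PartialDerivatives

variable {m n : ℕ}

theorem pder_apply {u : (Fin m → ℝ) → Fin n → ℝ} {x : Fin m → ℝ} (hu : DifferentiableAt ℝ u x)
    (i : Fin m) (j : Fin n) :
    pder (fun y => u y j) i x = fderiv ℝ u x (Pi.single i 1) j := by
  rw [pder, fderiv_apply hu]
  rfl

theorem sum_mul_pder (g : (Fin m → ℝ) → ℝ) (x v : Fin m → ℝ) :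
    ∑ l, v l * pder g l x = fderiv ℝ g x v := by
  conv_rhs => rw [pi_eq_sum_univ' v]
  simp [pder]

theorem sum_tder_eq_sum_fderiv_sub_dotProduct (ν : (Fin m → ℝ) → Fin m → ℝ)
    {F : (Fin m → ℝ) → Fin m → ℝ} {x : Fin m → ℝ} (hF : DifferentiableAt ℝ F x) :
    ∑ i, tder ν (fun y => F y i) i x
      = ∑ i, fderiv ℝ F x (Pi.single i 1) i - ν x ⬝ᵥ fderiv ℝ F x (ν x) := by
  simp only [tder, sum_mul_pder]
  simp only [pder_apply hF, fderiv_apply hF]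
  simp [Finset.sum_sub_distrib, dotProduct]

theorem isSymm_toMatrix'_fderiv_iff {u : (Fin n → ℝ) → Fin n → ℝ} {x : Fin n → ℝ}
    (hu : DifferentiableAt ℝ u x) :
    (LinearMap.toMatrix' (fderiv ℝ u x : (Fin n → ℝ) →ₗ[ℝ] Fin n → ℝ)).IsSymm ↔
      ∀ i j, pder (fun y => u y j) i x = pder (fun y => u y i) j x := by
  simp only [pder_apply hu]
  exact ⟨fun h i j => by simpa using h.apply i j,
    fun h => IsSymm.ext fun i j => by simpa using h i j⟩

theorem pder_pder {g : (Fin m → ℝ) → ℝ} {x : Fin m → ℝ}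
    (hg : DifferentiableAt ℝ (fderiv ℝ g) x) (i j : Fin m) :
    pder (fun y => pder g j y) i x = fderiv ℝ (fderiv ℝ g) x (Pi.single i 1) (Pi.single j 1) := by
  simp only [pder]
  rw [fderiv_clm_apply hg (differentiableAt_const _)]
  simp

theorem differentiableAt_grad3 {h : (Fin 3 → ℝ) → ℝ} {x : Fin 3 → ℝ}
    (hh : DifferentiableAt ℝ (fderiv ℝ h) x) : DifferentiableAt ℝ (grad3 h) x :=
  differentiableAt_pi.2 fun _ => hh.clm_apply (differentiableAt_const _)

theorem isSymm_toMatrix'_fderiv_grad3 {h : (Fin 3 → ℝ) → ℝ} {x : Fin 3 → ℝ}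
    (hh : ContDiffAt ℝ 2 h x) :
    (LinearMap.toMatrix' (fderiv ℝ (grad3 h) x : (Fin 3 → ℝ) →ₗ[ℝ] Fin 3 → ℝ)).IsSymm := by
  have hdh : DifferentiableAt ℝ (fderiv ℝ h) x :=
    (hh.fderiv_right le_rfl).differentiableAt one_ne_zero
  refine (isSymm_toMatrix'_fderiv_iff (differentiableAt_grad3 hdh)).2 fun i j => ?_
  simp only [grad3, pder_pder hdh]
  exact hh.isSymmSndFDerivAt (by simp) _ _

end PartialDerivatives

/-- Construction of tangentially divergence-free fluxes: for a `C¹` unit vector field `ν`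
with symmetric Jacobian and a `C²` scalar `h`, the field `f = ν × ∇h` satisfies
`Σ_i D_i f_i = 0`. -/
theorem cross_product_flux_tangentially_divergence_free
    (U : Set (Fin 3 → ℝ)) (hU : IsOpen U)
    (ν : (Fin 3 → ℝ) → Fin 3 → ℝ)
    (hν : ContDiffOn ℝ 1 ν U)
    (hunit : ∀ x ∈ U, ∑ l, ν x l ^ 2 = 1)
    (hsym : ∀ x ∈ U, ∀ i j, pder (fun y => ν y j) i x = pder (fun y => ν y i) j x)
    (h : (Fin 3 → ℝ) → ℝ) (hh : ContDiffOn ℝ 2 h U)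
    (f : (Fin 3 → ℝ) → Fin 3 → ℝ) (hf : ∀ x, f x = crossProduct (ν x) (grad3 h x)) :
    ∀ x ∈ U, ∑ i, tder ν (fun y => f y i) i x = 0 := by
  intro x hx
  have hxU : U ∈ nhds x := hU.mem_nhds hx
  have hνx : DifferentiableAt ℝ ν x := (hν.contDiffAt hxU).differentiableAt one_ne_zero
  have hhx : ContDiffAt ℝ 2 h x := hh.contDiffAt hxU
  have hgx : DifferentiableAt ℝ (grad3 h) x :=
    differentiableAt_grad3 ((hhx.fderiv_right le_rfl).differentiableAt one_ne_zero)
  have hJ := (isSymm_toMatrix'_fderiv_iff hνx).2 (hsym x hx)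
  have hH := isSymm_toMatrix'_fderiv_grad3 hhx
  have hunit_nhds : (fun y => ν y ⬝ᵥ ν y) =ᶠ[nhds x] fun _ => 1 := by
    filter_upwards [hxU] with y hy
    simpa [dotProduct, sq] using hunit y hy
  have hνν : fderiv ℝ ν x (ν x) = 0 :=
    LinearMap.map_eq_zero_of_isSymm_of_dotProduct_map_eq_zero hJ
      (dotProduct_fderiv_eq_zero_of_eventually_dotProduct_self_eq_one hνx hunit_nhds)
  obtain rfl : f = fun y => ν y ⨯₃ grad3 h y := funext hf
  have hcurlν := LinearMap.sum_map_single_cross_apply_eq_zero_of_isSymm hJ (grad3 h x)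
  have hcurlg := LinearMap.sum_cross_map_single_apply_eq_zero_of_isSymm hH (ν x)
  simp only [ContinuousLinearMap.coe_coe] at hcurlν hcurlg
  rw [sum_tder_eq_sum_fderiv_sub_dotProduct ν (hνx.crossProduct hgx)]
  simp [fderiv_crossProduct_apply hνx hgx, hνν, Finset.sum_add_distrib, hcurlν, hcurlg]
end
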